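/- arXiv:1903.02179 — 2 statements merged into one kernel-verified Lean document; each statement's English description precedes it below -/
import Mathlib

section
/- For z = E + iη with |E| < 3 and 0 < η ≤ 3, there exist constants c, C > 0 such that c ≤ |m_sc(z)| ≤ C and c√(κ+η) ≤ |1 - m_sc(z)²| ≤ C√(κ+η), where κ = ||E| - 2|. -/
/-!
A root of `m² + z m + 1 = 0` satisfies `m (m + z) = -1`, which pins `‖m‖` between
`(2‖z‖ + 1)⁻¹` and `‖z‖ + 1`. Completing the square, `1 - m² = -m (2m + z)` with
`(2m + z)² = z² - 4 = (z - 2)(z + 2)`, so `‖1 - m²‖ = ‖m‖ √‖z² - 4‖`. For `z = E + iη` the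
factor nearer to the edge has modulus `√(κ² + η²) ≍ κ + η`, while the other stays in `[2, 6]`.
-/

open Complex

section Quadratic

variable {z m : ℂ}

lemma norm_le_norm_add_one_of_quadratic (hm : m ^ 2 + z * m + 1 = 0) : ‖m‖ ≤ ‖z‖ + 1 := by
  have hsq : ‖m‖ ^ 2 ≤ ‖z‖ * ‖m‖ + 1 :=
    calc ‖m‖ ^ 2 = ‖z * m + 1‖ := by rw [← norm_pow, ← norm_neg]; congr 1; linear_combination -hm
      _ ≤ ‖z‖ * ‖m‖ + 1 := by simpa [norm_mul] using norm_add_le (z * m) 1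
  nlinarith [norm_nonneg z, norm_nonneg m]

lemma inv_two_mul_norm_add_one_le_norm_of_quadratic (hm : m ^ 2 + z * m + 1 = 0) :
    (2 * ‖z‖ + 1)⁻¹ ≤ ‖m‖ := by
  have hprod : ‖m‖ * ‖m + z‖ = 1 := by
    rw [← norm_mul, show m * (m + z) = -1 by linear_combination hm, norm_neg, norm_one]
  have hsum : ‖m + z‖ ≤ 2 * ‖z‖ + 1 := by
    linarith [norm_add_le m z, norm_le_norm_add_one_of_quadratic hm]
  rw [inv_le_iff_one_le_mul₀' (by positivity)]
  nlinarith [norm_nonneg m]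

lemma norm_one_sub_sq_of_quadratic (hm : m ^ 2 + z * m + 1 = 0) :
    ‖1 - m ^ 2‖ = ‖m‖ * √‖z ^ 2 - 4‖ := by
  have hsquare : ‖z ^ 2 - 4‖ = ‖2 * m + z‖ ^ 2 := by
    rw [← norm_pow]; congr 1; linear_combination -4 * hm
  rw [hsquare, Real.sqrt_sq (norm_nonneg _), ← norm_mul, ← norm_neg]
  congr 1
  linear_combination -hm

end Quadratic

section Edge

variable (E η : ℝ)

lemma sq_norm_sq_sub_four :
    ‖((E : ℂ) + η * I) ^ 2 - 4‖ ^ 2 = ((|E| - 2) ^ 2 + η ^ 2) * ((|E| + 2) ^ 2 + η ^ 2) := by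
  rw [Complex.sq_norm, normSq_apply]
  simp only [sub_re, sub_im, pow_two, mul_re, mul_im, add_re, add_im, ofReal_re, ofReal_im,
    I_re, I_im, re_ofNat, im_ofNat]
  linear_combination (8 - E ^ 2 - |E| ^ 2 - 2 * η ^ 2) * sq_abs E

lemma abs_abs_sub_two_add_le_norm_sq_sub_four :
    |(|E| - 2)| + η ≤ ‖((E : ℂ) + η * I) ^ 2 - 4‖ := by
  refine (le_abs_self _).trans (abs_le_of_sq_le_sq ?_ (norm_nonneg _))
  rw [sq_norm_sq_sub_four, ← sq_abs (|E| - 2)]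
  have hfar : 2 ≤ (|E| + 2) ^ 2 + η ^ 2 := by nlinarith [abs_nonneg E, sq_nonneg η]
  nlinarith [sq_nonneg (|(|E| - 2)| - η),
    mul_le_mul_of_nonneg_left hfar (add_nonneg (sq_nonneg |(|E| - 2)|) (sq_nonneg η))]

variable {E η}

lemma norm_sq_sub_four_le (hE : |E| ≤ 3) (hη₀ : 0 ≤ η) (hη : η ≤ 3) :
    ‖((E : ℂ) + η * I) ^ 2 - 4‖ ≤ 6 * (|(|E| - 2)| + η) := by
  have hκ := abs_nonneg (|E| - 2)
  rw [← sq_le_sq₀ (norm_nonneg _) (by positivity), sq_norm_sq_sub_four, ← sq_abs (|E| - 2)]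
  have hfar : (|E| + 2) ^ 2 + η ^ 2 ≤ 36 := by nlinarith [abs_nonneg E]
  nlinarith [mul_le_mul_of_nonneg_left hfar (add_nonneg (sq_nonneg |(|E| - 2)|) (sq_nonneg η)),
    mul_nonneg hκ hη₀]

end Edge

/-- On the domain `z = E + iη`, `|E| < 3`, `0 < η ≤ 3`, there are constants
`c, C > 0` with `c ≤ |m_sc(z)| ≤ C` and `c√(κ+η) ≤ |1 - m_sc(z)²| ≤ C√(κ+η)`,
where `κ = ||E| - 2|` and `m_sc(z)` is characterized by `m² + zm + 1 = 0`, `Im m > 0`. -/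
theorem msc_basic_bounds :
    ∃ c C : ℝ, 0 < c ∧ 0 < C ∧
      ∀ (E η : ℝ) (m : ℂ), |E| < 3 → 0 < η → η ≤ 3 →
        m ^ 2 + ((E : ℂ) + (η : ℂ) * Complex.I) * m + 1 = 0 → 0 < m.im →
        (c ≤ ‖m‖ ∧ ‖m‖ ≤ C ∧
         c * Real.sqrt (|(|E| - 2)| + η) ≤ ‖1 - m ^ 2‖ ∧
         ‖1 - m ^ 2‖ ≤ C * Real.sqrt (|(|E| - 2)| + η)) := by
  refine ⟨1 / 13, 21, by norm_num, by norm_num, fun E η m hE hη₀ hη hm _ => ?_⟩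
  have hz : ‖(E : ℂ) + η * I‖ ≤ 6 := by
    have := norm_add_le (E : ℂ) (η * I)
    simp only [norm_mul, norm_real, Real.norm_eq_abs, norm_I, mul_one, abs_of_pos hη₀] at this
    linarith
  have hm_lower : 1 / 13 ≤ ‖m‖ :=
    le_trans (by rw [one_div]; gcongr; linarith) (inv_two_mul_norm_add_one_le_norm_of_quadratic hm)
  have hm_upper : ‖m‖ ≤ 7 := by linarith [norm_le_norm_add_one_of_quadratic hm]
  have hedge_lower := Real.sqrt_le_sqrt (abs_abs_sub_two_add_le_norm_sq_sub_four E η)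
  have hedge_upper : √‖((E : ℂ) + η * I) ^ 2 - 4‖ ≤ 3 * √(|(|E| - 2)| + η) :=
    calc _ ≤ √(6 * (|(|E| - 2)| + η)) := Real.sqrt_le_sqrt (norm_sq_sub_four_le hE.le hη₀.le hη)
      _ = √6 * √(|(|E| - 2)| + η) := Real.sqrt_mul (by norm_num) _
      _ ≤ 3 * √(|(|E| - 2)| + η) := by
        gcongr; rw [Real.sqrt_le_left (by norm_num)]; norm_num
  rw [norm_one_sub_sq_of_quadratic hm]
  refine ⟨hm_lower, by linarith, mul_le_mul hm_lower hedge_lower (by positivity) (by positivity), ?_⟩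
  calc ‖m‖ * √‖((E : ℂ) + η * I) ^ 2 - 4‖ ≤ 7 * (3 * √(|(|E| - 2)| + η)) :=
        mul_le_mul hm_upper hedge_upper (by positivity) (by norm_num)
    _ = 21 * √(|(|E| - 2)| + η) := by ring
end

section
/- (Weyl's inequality) Let A and B be N×N real symmetric matrices with eigenvalues arranged in decreasing order λ_1^A ≥ … ≥ λ_N^A, λ_1^B ≥ … ≥ λ_N^B, and λ_1^{A+B} ≥ … ≥ λ_N^{A+B}. Then for indices r, s, i, j, k with r+s-1 ≤ i ≤ j+k-N, one has λ_j^A + λ_k^B ≤ λ_i^{A+B} ≤ λ_r^A + λ_s^B. -/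
open Finset Submodule Module RealInnerProductSpace
open scoped Classical

section helpers

variable {N : ℕ}

local notation "E" => EuclideanSpace ℝ (Fin N)

private lemma weyl_repr_zero (b : OrthonormalBasis (Fin N) ℝ (EuclideanSpace ℝ (Fin N)))
    (S : Finset (Fin N)) {x : EuclideanSpace ℝ (Fin N)}
    (hx : x ∈ span ℝ (↑(S.image b) : Set (EuclideanSpace ℝ (Fin N))))
    {a : Fin N} (ha : a ∉ S) : b.repr x a = 0 := by
  induction hx using Submodule.span_induction with
  | mem y hy =>
      obtain ⟨c, hc, rfl⟩ := Finset.mem_image.mp (by exact_mod_cast hy)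
      have hac : a ≠ c := fun h => ha (h ▸ hc)
      simp [b.repr_self, EuclideanSpace.single_apply, hac]
  | zero => simp
  | add y z _ _ hy hz => simp [map_add, hy, hz]
  | smul c y _ hy => simp [map_smul, hy]

private lemma weyl_inner_eq_sum (b : OrthonormalBasis (Fin N) ℝ (EuclideanSpace ℝ (Fin N)))
    (T : EuclideanSpace ℝ (Fin N) →ₗ[ℝ] EuclideanSpace ℝ (Fin N)) (μ : Fin N → ℝ)
    (hT : ∀ a, T (b a) = μ a • b a) (x : EuclideanSpace ℝ (Fin N)) :
    ⟪x, T x⟫ = ∑ a, μ a * (b.repr x a) ^ 2 := by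
  have hTx : T x = ∑ a, (b.repr x a * μ a) • b a := by
    conv_lhs => rw [← b.sum_repr x]
    rw [map_sum]
    exact Finset.sum_congr rfl fun a _ => by rw [map_smul, hT, smul_smul]
  rw [hTx, inner_sum]
  refine Finset.sum_congr rfl fun a _ => ?_
  rw [real_inner_smul_right, real_inner_comm, ← b.repr_apply_apply]
  ring

private lemma weyl_norm_sq (b : OrthonormalBasis (Fin N) ℝ (EuclideanSpace ℝ (Fin N)))
    (x : EuclideanSpace ℝ (Fin N)) : ‖x‖ ^ 2 = ∑ a, (b.repr x a) ^ 2 := by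
  have h2 := weyl_inner_eq_sum b LinearMap.id (fun _ => 1) (fun a => by simp) x
  simp only [LinearMap.id_coe, id_eq, one_mul] at h2
  rw [← real_inner_self_eq_norm_sq]
  exact h2

private lemma weyl_quad_le (b : OrthonormalBasis (Fin N) ℝ (EuclideanSpace ℝ (Fin N)))
    (T : EuclideanSpace ℝ (Fin N) →ₗ[ℝ] EuclideanSpace ℝ (Fin N)) (μ : Fin N → ℝ)
    (hT : ∀ a, T (b a) = μ a • b a) (S : Finset (Fin N)) (t : ℝ)
    (hμ : ∀ a ∈ S, μ a ≤ t) {x : EuclideanSpace ℝ (Fin N)}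
    (hx : x ∈ span ℝ (↑(S.image b) : Set (EuclideanSpace ℝ (Fin N)))) :
    ⟪x, T x⟫ ≤ t * ‖x‖ ^ 2 := by
  rw [weyl_inner_eq_sum b T μ hT x, weyl_norm_sq b x, Finset.mul_sum]
  refine Finset.sum_le_sum fun a _ => ?_
  by_cases haS : a ∈ S
  · nlinarith [hμ a haS, sq_nonneg (b.repr x a)]
  · rw [weyl_repr_zero b S hx haS]; simp

private lemma weyl_finrank_span (b : OrthonormalBasis (Fin N) ℝ (EuclideanSpace ℝ (Fin N)))
    (S : Finset (Fin N)) :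
    finrank ℝ (span ℝ (↑(S.image b) : Set (EuclideanSpace ℝ (Fin N)))) = S.card := by
  have hinj : Function.Injective b := b.coe_toBasis ▸ b.toBasis.injective
  have hli : LinearIndependent ℝ ((↑) : (↑(S.image b) : Set (EuclideanSpace ℝ (Fin N))) → EuclideanSpace ℝ (Fin N)) := by
    apply ((linearIndepOn_id_range_iff b.orthonormal.linearIndependent.injective).mpr b.orthonormal.linearIndependent).mono
    intro y hy
    simp only [Finset.coe_image, Set.mem_image] at hy
    obtain ⟨c, _, rfl⟩ := hy
    exact Set.mem_range_self c
  rw [finrank_span_finset_eq_card hli, Finset.card_image_of_injective _ hinj]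

/-- Core dimension-counting step of Weyl's inequality. -/
private lemma weyl_core (b₁ b₂ b₃ : OrthonormalBasis (Fin N) ℝ (EuclideanSpace ℝ (Fin N)))
    (T₁ T₂ T₃ : EuclideanSpace ℝ (Fin N) →ₗ[ℝ] EuclideanSpace ℝ (Fin N))
    (μ₁ μ₂ μ₃ : Fin N → ℝ)
    (hT₁ : ∀ a, T₁ (b₁ a) = μ₁ a • b₁ a) (hT₂ : ∀ a, T₂ (b₂ a) = μ₂ a • b₂ a)
    (hT₃ : ∀ a, T₃ (b₃ a) = μ₃ a • b₃ a)
    (hsum : ∀ x, ⟪x, T₃ x⟫ = ⟪x, T₁ x⟫ + ⟪x, T₂ x⟫)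
    (S₁ S₂ S₃ : Finset (Fin N)) (hcard : 2 * N < S₁.card + S₂.card + S₃.card)
    (t₁ t₂ t₃ : ℝ)
    (h₁ : ∀ a ∈ S₁, μ₁ a ≤ t₁) (h₂ : ∀ a ∈ S₂, μ₂ a ≤ t₂) (h₃ : ∀ a ∈ S₃, t₃ ≤ μ₃ a) :
    t₃ ≤ t₁ + t₂ := by
  set V₁ : Submodule ℝ (EuclideanSpace ℝ (Fin N)) := span ℝ (↑(S₁.image b₁)) with hV₁
  set V₂ : Submodule ℝ (EuclideanSpace ℝ (Fin N)) := span ℝ (↑(S₂.image b₂)) with hV₂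
  set V₃ : Submodule ℝ (EuclideanSpace ℝ (Fin N)) := span ℝ (↑(S₃.image b₃)) with hV₃
  have hd₁ : finrank ℝ V₁ = S₁.card := weyl_finrank_span b₁ S₁
  have hd₂ : finrank ℝ V₂ = S₂.card := weyl_finrank_span b₂ S₂
  have hd₃ : finrank ℝ V₃ = S₃.card := weyl_finrank_span b₃ S₃
  have hE : finrank ℝ (EuclideanSpace ℝ (Fin N)) = N := by
    simp [finrank_euclideanSpace]
  have e12 : finrank ℝ ↥(V₁ ⊔ V₂) + finrank ℝ ↥(V₁ ⊓ V₂) = finrank ℝ V₁ + finrank ℝ V₂ :=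
    Submodule.finrank_sup_add_finrank_inf_eq V₁ V₂
  have e123 : finrank ℝ ↥((V₁ ⊓ V₂) ⊔ V₃) + finrank ℝ ↥((V₁ ⊓ V₂) ⊓ V₃)
      = finrank ℝ ↥(V₁ ⊓ V₂) + finrank ℝ V₃ :=
    Submodule.finrank_sup_add_finrank_inf_eq _ V₃
  have hle12 : finrank ℝ ↥(V₁ ⊔ V₂) ≤ N := (Submodule.finrank_le _).trans_eq hE
  have hle123 : finrank ℝ ↥((V₁ ⊓ V₂) ⊔ V₃) ≤ N := (Submodule.finrank_le _).trans_eq hE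
  have hpos : 0 < finrank ℝ ↥((V₁ ⊓ V₂) ⊓ V₃) := by omega
  have hne : (V₁ ⊓ V₂) ⊓ V₃ ≠ ⊥ := by
    intro h
    rw [h, finrank_bot] at hpos
    exact lt_irrefl 0 hpos
  obtain ⟨x, hxmem, hx0⟩ := Submodule.exists_mem_ne_zero_of_ne_bot hne
  have hx₁ : x ∈ V₁ := hxmem.1.1
  have hx₂ : x ∈ V₂ := hxmem.1.2
  have hx₃ : x ∈ V₃ := hxmem.2
  have q₁ : ⟪x, T₁ x⟫ ≤ t₁ * ‖x‖ ^ 2 := weyl_quad_le b₁ T₁ μ₁ hT₁ S₁ t₁ h₁ hx₁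
  have q₂ : ⟪x, T₂ x⟫ ≤ t₂ * ‖x‖ ^ 2 := weyl_quad_le b₂ T₂ μ₂ hT₂ S₂ t₂ h₂ hx₂
  have q₃ : t₃ * ‖x‖ ^ 2 ≤ ⟪x, T₃ x⟫ := by
    have := weyl_quad_le b₃ (-T₃) (fun a => -μ₃ a) (fun a => by simp [hT₃ a, neg_smul])
      S₃ (-t₃) (fun a ha => neg_le_neg (h₃ a ha)) hx₃
    simp only [LinearMap.neg_apply, inner_neg_right, neg_mul] at this
    linarith
  have hnx : (0:ℝ) < ‖x‖ ^ 2 := pow_pos (norm_pos_iff.mpr hx0) 2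
  have key : t₃ * ‖x‖ ^ 2 ≤ (t₁ + t₂) * ‖x‖ ^ 2 := by
    have := hsum x
    nlinarith
  exact le_of_mul_le_mul_right key hnx

end helpers

/-- Weyl's inequality: if `λA, λB, λC` list the eigenvalues of the real symmetric
matrices `A`, `B`, `A + B` respectively, with multiplicity and in decreasing order
(indices `0, …, N-1` corresponding to `1, …, N`), then for indices with
`r + s ≤ i` and `i + N ≤ j + k + 1` (the 0-based form of `r+s-1 ≤ i ≤ j+k-N`),
one has `λA j + λB k ≤ λC i ≤ λA r + λB s`. -/
theorem weyl_inequality {N : ℕ} (A B : Matrix (Fin N) (Fin N) ℝ)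
    (hA : A.IsHermitian) (hB : B.IsHermitian) (hAB : (A + B).IsHermitian)
    (lamA lamB lamC : Fin N → ℝ)
    (hAdec : Antitone lamA) (hBdec : Antitone lamB) (hCdec : Antitone lamC)
    (hAeig : ∃ σ : Equiv.Perm (Fin N), lamA = hA.eigenvalues ∘ σ)
    (hBeig : ∃ σ : Equiv.Perm (Fin N), lamB = hB.eigenvalues ∘ σ)
    (hCeig : ∃ σ : Equiv.Perm (Fin N), lamC = hAB.eigenvalues ∘ σ)
    (r s i j k : Fin N)
    (h1 : (r : ℕ) + (s : ℕ) ≤ (i : ℕ))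
    (h2 : (i : ℕ) + N ≤ (j : ℕ) + (k : ℕ) + 1) :
    lamA j + lamB k ≤ lamC i ∧ lamC i ≤ lamA r + lamB s := by
  obtain ⟨σA, hσA⟩ := hAeig
  obtain ⟨σB, hσB⟩ := hBeig
  obtain ⟨σC, hσC⟩ := hCeig
  set bA := hA.eigenvectorBasis.reindex σA.symm with hbA
  set bB := hB.eigenvectorBasis.reindex σB.symm with hbB
  set bC := hAB.eigenvectorBasis.reindex σC.symm with hbC
  set TA := Matrix.toEuclideanLin A with hTAdef
  set TB := Matrix.toEuclideanLin B with hTBdef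
  set TC := Matrix.toEuclideanLin (A + B) with hTCdef
  have hTA : ∀ a, TA (bA a) = lamA a • bA a := by
    intro a
    have := hA.mulVec_eigenvectorBasis (σA a)
    apply (WithLp.equiv 2 (Fin N → ℝ)).injective
    simp only [hbA, OrthonormalBasis.reindex_apply, Equiv.symm_symm, hTAdef,
      Matrix.ofLp_toEuclideanLin_apply]
    ext m
    have := congrFun this m
    simpa [hσA] using this
  have hTB : ∀ a, TB (bB a) = lamB a • bB a := by
    intro a
    have := hB.mulVec_eigenvectorBasis (σB a)
    apply (WithLp.equiv 2 (Fin N → ℝ)).injective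
    simp only [hbB, OrthonormalBasis.reindex_apply, Equiv.symm_symm, hTBdef,
      Matrix.ofLp_toEuclideanLin_apply]
    ext m
    have := congrFun this m
    simpa [hσB] using this
  have hTC : ∀ a, TC (bC a) = lamC a • bC a := by
    intro a
    have := hAB.mulVec_eigenvectorBasis (σC a)
    apply (WithLp.equiv 2 (Fin N → ℝ)).injective
    simp only [hbC, OrthonormalBasis.reindex_apply, Equiv.symm_symm, hTCdef,
      Matrix.ofLp_toEuclideanLin_apply]
    ext m
    have := congrFun this m
    simpa [hσC, Matrix.add_mulVec] using this
  have hsum : ∀ x : EuclideanSpace ℝ (Fin N), ⟪x, TC x⟫ = ⟪x, TA x⟫ + ⟪x, TB x⟫ := by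
    intro x
    have h : TC = TA + TB := by
      rw [hTCdef, hTAdef, hTBdef]; exact map_add _ A B
    rw [h, LinearMap.add_apply, inner_add_right]
  have hrN : (r:ℕ) < N := r.isLt
  have hsN : (s:ℕ) < N := s.isLt
  have hiN : (i:ℕ) < N := i.isLt
  have hjN : (j:ℕ) < N := j.isLt
  have hkN : (k:ℕ) < N := k.isLt
  constructor
  · -- lower bound: lamA j + lamB k ≤ lamC i
    have := weyl_core bA bB bC (-TA) (-TB) (-TC) (fun a => -lamA a) (fun a => -lamB a)
      (fun a => -lamC a)
      (fun a => by simp [hTA a, neg_smul]) (fun a => by simp [hTB a, neg_smul])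
      (fun a => by simp [hTC a, neg_smul])
      (fun x => by simp only [LinearMap.neg_apply, inner_neg_right]; rw [hsum x]; ring)
      (Iic j) (Iic k) (Ici i)
      (by rw [Fin.card_Iic, Fin.card_Iic, Fin.card_Ici]; omega)
      (-lamA j) (-lamB k) (-lamC i)
      (fun a ha => neg_le_neg (hAdec (Finset.mem_Iic.mp ha)))
      (fun a ha => neg_le_neg (hBdec (Finset.mem_Iic.mp ha)))
      (fun a ha => neg_le_neg (hCdec (Finset.mem_Ici.mp ha)))
    linarith
  · -- upper bound: lamC i ≤ lamA r + lamB s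
    exact weyl_core bA bB bC TA TB TC lamA lamB lamC hTA hTB hTC hsum
      (Ici r) (Ici s) (Iic i)
      (by rw [Fin.card_Ici, Fin.card_Ici, Fin.card_Iic]; omega)
      (lamA r) (lamB s) (lamC i)
      (fun a ha => hAdec (Finset.mem_Ici.mp ha))
      (fun a ha => hBdec (Finset.mem_Ici.mp ha))
      (fun a ha => hCdec (Finset.mem_Iic.mp ha))
end
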